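/- For a finite set K of S > 1 distinct positive integers, the set Δ0 = { Σ_{n≥1} 2(-1)^{n-1}/2^{a1+...+an} : a_i ∈ K } is a perfect set (closed with no isolated points). -/

import Mathlib

open Filter Topology

/-- Partial sum `a 0 + ... + a n` of a digit sequence. -/
noncomputable def psum (a : ℕ → ℕ) (n : ℕ) : ℕ := ∑ i ∈ Finset.range (n + 1), a i

/-- Value of the alternating series `Σ_{n≥1} 2(-1)^{n-1}/2^{a1+...+an}`. -/
noncomputable def val (a : ℕ → ℕ) : ℝ := ∑' n : ℕ, (2 * (-1 : ℝ) ^ n) / 2 ^ (psum a n)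

/-- The set `Δ0` of all values of the alternating series over `K`-valued digit sequences. -/
noncomputable def Delta0 (K : Set ℕ) : Set ℝ :=
  { y | ∃ a : ℕ → ℕ, (∀ i, a i ∈ K) ∧ y = val a }

/-!
Shifting the digit sequence gives the self-similarity `val a = (2 - val (a ∘ succ)) / 2 ^ a₀`,
i.e. `Δ0` is the attractor of the maps `x ↦ (2 - x) / 2 ^ k`, `k ∈ K`, each of ratio at most `1/2`.
The alternating series bound puts all values in `[0, 1]`; feeding this back into the
self-similarity twice puts `val a` in the open interval `(1 / 2 ^ a₀, 2 / 2 ^ a₀)`. These intervals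
are disjoint for distinct first digits, so `val` is injective, while sequences sharing their first
`N` digits have values within `2⁻ᴺ`. Hence `Δ0` is a continuous image of the compact space `Kᴺ`,
and changing the `N`-th digit gives another point of `Δ0` within `2⁻ᴺ`.
-/

open Set Function

variable {a b : ℕ → ℕ}

lemma psum_zero (a : ℕ → ℕ) : psum a 0 = a 0 := by
  simp [psum]

lemma psum_succ (a : ℕ → ℕ) (n : ℕ) : psum a (n + 1) = a 0 + psum (fun i => a (i + 1)) n := by
  rw [psum, Finset.sum_range_succ', add_comm, psum]

lemma psum_mono (a : ℕ → ℕ) : Monotone (psum a) :=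
  fun _ _ hmn => Finset.sum_le_sum_of_subset (Finset.range_subset_range.2 (by omega))

lemma le_psum (ha : ∀ i, 0 < a i) (n : ℕ) : n + 1 ≤ psum a n := by
  simpa [psum] using Finset.card_nsmul_le_sum (Finset.range (n + 1)) a 1 fun i _ => ha i

lemma continuous_psum (n : ℕ) : Continuous fun a : ℕ → ℕ => psum a n := by
  unfold psum; fun_prop

lemma two_div_two_pow_psum_le (ha : ∀ i, 0 < a i) (n : ℕ) :
    (2 : ℝ) / 2 ^ psum a n ≤ (1 / 2) ^ n := by
  calc (2 : ℝ) / 2 ^ psum a n ≤ 2 / 2 ^ (n + 1) := by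
        gcongr
        · norm_num
        · exact le_psum ha n
    _ = (1 / 2) ^ n := by rw [pow_succ, one_div_pow]; field_simp

lemma summable_two_div_two_pow_psum (ha : ∀ i, 0 < a i) :
    Summable fun n => (2 : ℝ) / 2 ^ psum a n :=
  summable_geometric_two.of_nonneg_of_le (fun _ => by positivity) (two_div_two_pow_psum_le ha)

lemma antitone_two_div_two_pow_psum (a : ℕ → ℕ) : Antitone fun n => (2 : ℝ) / 2 ^ psum a n :=
  fun _ _ hmn => by
    dsimp only
    gcongr
    · norm_num
    · exact psum_mono a hmn

lemma val_eq_tsum (a : ℕ → ℕ) : val a = ∑' n, (-1 : ℝ) ^ n * (2 / 2 ^ psum a n) := by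
  rw [val]
  exact tsum_congr fun n => by ring

lemma val_mem_Icc (ha : ∀ i, 0 < a i) : val a ∈ Icc 0 1 := by
  have hlim := (summable_two_div_two_pow_psum ha).tendsto_alternating_series_tsum
  have hanti := antitone_two_div_two_pow_psum a
  rw [val_eq_tsum]
  constructor
  · simpa using hanti.alternating_series_le_tendsto hlim 0
  · calc _ ≤ (2 : ℝ) / 2 ^ psum a 0 := by simpa using hanti.tendsto_le_alternating_series hlim 0
      _ ≤ 1 := by simpa using two_div_two_pow_psum_le ha 0

lemma val_eq_two_sub_val_tail_div (ha : ∀ i, 0 < a i) :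
    val a = (2 - val fun i => a (i + 1)) / 2 ^ a 0 := by
  rw [val_eq_tsum, ((summable_two_div_two_pow_psum ha).alternating).tsum_eq_zero_add,
    val_eq_tsum, sub_div, ← tsum_div_const]
  simp only [psum_succ, psum_zero, pow_add, pow_succ, pow_zero]
  rw [sub_eq_add_neg, ← tsum_neg]
  congr 1
  · ring
  · exact tsum_congr fun n => by field_simp

lemma val_pos (ha : ∀ i, 0 < a i) : 0 < val a := by
  have htail := (val_mem_Icc fun i => ha (i + 1)).2
  rw [val_eq_two_sub_val_tail_div ha]
  exact div_pos (by linarith) (by positivity)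

lemma val_lt_one (ha : ∀ i, 0 < a i) : val a < 1 := by
  have htail := val_pos fun i => ha (i + 1)
  have hhead : (2 : ℝ) ≤ 2 ^ a 0 := le_self_pow₀ one_le_two (ha 0).ne'
  rw [val_eq_two_sub_val_tail_div ha, div_lt_one (by positivity)]
  linarith

lemma val_mem_Ioo (ha : ∀ i, 0 < a i) : val a ∈ Ioo (1 / 2 ^ a 0) (2 / 2 ^ a 0) := by
  have htail := val_pos fun i => ha (i + 1)
  have htail' := val_lt_one fun i => ha (i + 1)
  rw [val_eq_two_sub_val_tail_div ha]
  constructor <;> gcongr <;> linarith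

lemma head_eq_of_val_eq (ha : ∀ i, 0 < a i) (hb : ∀ i, 0 < b i) (h : val a = val b) :
    a 0 = b 0 := by
  by_contra hne
  wlog hlt : a 0 < b 0 generalizing a b
  · exact this hb ha h.symm (Ne.symm hne) (lt_of_le_of_ne (not_lt.1 hlt) (Ne.symm hne))
  have hsep : (2 : ℝ) / 2 ^ b 0 ≤ 1 / 2 ^ a 0 := by
    rw [div_le_div_iff₀ (by positivity) (by positivity), one_mul, ← pow_succ']
    exact pow_le_pow_right₀ one_le_two hlt
  linarith [(val_mem_Ioo ha).1, (val_mem_Ioo hb).2]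

lemma val_injOn : InjOn val {a | ∀ i, 0 < a i} := by
  intro a ha b hb h
  funext n
  induction n generalizing a b with
  | zero => exact head_eq_of_val_eq ha hb h
  | succ n ih =>
    have hhead := head_eq_of_val_eq ha hb h
    rw [val_eq_two_sub_val_tail_div ha, val_eq_two_sub_val_tail_div hb, hhead,
      div_left_inj' (by positivity), sub_right_inj] at h
    exact ih (fun i => ha (i + 1)) (fun i => hb (i + 1)) h

lemma abs_val_sub_le (ha : ∀ i, 0 < a i) (hb : ∀ i, 0 < b i) {N : ℕ}
    (hab : ∀ i < N, a i = b i) : |val a - val b| ≤ (1 / 2) ^ N := by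
  induction N generalizing a b with
  | zero =>
    obtain ⟨ha₀, ha₁⟩ := val_mem_Icc ha
    obtain ⟨hb₀, hb₁⟩ := val_mem_Icc hb
    rw [pow_zero, abs_sub_le_iff]
    constructor <;> linarith
  | succ N ih =>
    have htail := ih (fun i => ha (i + 1)) (fun i => hb (i + 1)) fun i hi => hab (i + 1) (by omega)
    have hhead : (2 : ℝ) ≤ 2 ^ a 0 := le_self_pow₀ one_le_two (ha 0).ne'
    rw [val_eq_two_sub_val_tail_div ha, val_eq_two_sub_val_tail_div hb, ← hab 0 N.succ_pos,
      ← sub_div, abs_div, sub_sub_sub_cancel_left, abs_sub_comm,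
      abs_of_pos (by positivity : (0 : ℝ) < 2 ^ a 0)]
    calc _ ≤ (1 / 2 : ℝ) ^ N / 2 := div_le_div₀ (by positivity) htail two_pos hhead
      _ = (1 / 2) ^ (N + 1) := by rw [pow_succ]; ring

lemma continuousOn_val : ContinuousOn val {a | ∀ i, 0 < a i} := by
  refine continuousOn_tsum (fun n => ?_) summable_geometric_two fun n a ha => ?_
  · exact ((continuous_of_discreteTopology (f := fun p : ℕ => 2 * (-1 : ℝ) ^ n / 2 ^ p)).comp
      (continuous_psum n)).continuousOn
  · simpa [abs_div] using two_div_two_pow_psum_le ha n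

lemma Delta0_eq_image (K : Set ℕ) : Delta0 K = val '' univ.pi fun _ => K := by
  ext y
  simp [Delta0, eq_comm]

lemma isCompact_Delta0 {K : Set ℕ} (hK : K.Finite) (hpos : ∀ k ∈ K, 0 < k) :
    IsCompact (Delta0 K) := by
  rw [Delta0_eq_image]
  exact (isCompact_univ_pi fun _ => hK.isCompact).image_of_continuousOn
    (continuousOn_val.mono fun a ha i => hpos _ (ha i trivial))

lemma preperfect_Delta0 {K : Set ℕ} (hK : K.Nontrivial) (hpos : ∀ k ∈ K, 0 < k) :
    Preperfect (Delta0 K) := by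
  rw [Delta0_eq_image, preperfect_iff_nhds]
  rintro _ ⟨a, ha, rfl⟩ U hU
  obtain ⟨ε, hε, hball⟩ := Metric.mem_nhds_iff.mp hU
  obtain ⟨N, hN⟩ := exists_pow_lt_of_lt_one hε one_half_lt_one
  obtain ⟨k, hk, hka⟩ := hK.exists_ne (a N)
  have hb : update a N k ∈ univ.pi fun _ => K := (update_mem_pi_iff_of_mem ha).2 fun _ => hk
  have pos_of_mem {c : ℕ → ℕ} (hc : c ∈ univ.pi fun _ => K) i : 0 < c i := hpos _ (hc i trivial)
  refine ⟨val (update a N k), ⟨hball ?_, mem_image_of_mem val hb⟩, fun h => hka ?_⟩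
  · rw [Metric.mem_ball, Real.dist_eq]
    refine (abs_val_sub_le (pos_of_mem hb) (pos_of_mem ha) fun i hi => ?_).trans_lt hN
    exact update_of_ne hi.ne _ _
  · simpa using congrFun (val_injOn (pos_of_mem hb) (pos_of_mem ha) h) N

theorem Delta0_perfect (K : Finset ℕ) (hcard : 1 < K.card) (hpos : ∀ k ∈ K, 0 < k) :
    Perfect (Delta0 ↑K) :=
  ⟨(isCompact_Delta0 K.finite_toSet hpos).isClosed,
    preperfect_Delta0 (Finset.one_lt_card_iff_nontrivial.1 hcard) hpos⟩
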